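/- Let R be a ring and M a right R-module which is either finitely generated projective, or finitely generated semisimple. Then for every anti-endomorphism α of End_R(M), the form b_α is right regular. -/

import Mathlib

open MulOpposite TensorProduct Function

universe u v w v'

section Core

/-- An anti-endomorphism of a ring: additive, unital, reverses multiplication. -/
def IsAntiEndo {W : Type*} [Ring W] (α : W → W) : Prop :=
  (∀ u v : W, α (u + v) = α u + α v) ∧ α 1 = 1 ∧ ∀ u v : W, α (u * v) = α v * α u

/-- An anti-automorphism of a ring: a bijective anti-endomorphism. -/
def IsAntiAuto {W : Type*} [Ring W] (α : W → W) : Prop :=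
  IsAntiEndo α ∧ Function.Bijective α

/-- An inner automorphism of a ring: conjugation by a unit. -/
def IsInnerAut {W : Type*} [Ring W] (φ : W → W) : Prop :=
  ∃ u : Wˣ, ∀ w : W, φ w = ↑u * w * ↑u⁻¹

variable (R : Type u) [Ring R]

/-- A double `R`-module structure on the additive group `K`: two commuting
right `R`-module structures `m0` and `m1`. -/
structure DoubleModule (K : Type v) [AddCommGroup K] where
  m0 : K → R → K
  m1 : K → R → K
  m0_add_left : ∀ (k k' : K) (r : R), m0 (k + k') r = m0 k r + m0 k' r
  m0_add_right : ∀ (k : K) (r r' : R), m0 k (r + r') = m0 k r + m0 k r'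
  m0_mul : ∀ (k : K) (r r' : R), m0 k (r * r') = m0 (m0 k r) r'
  m0_one : ∀ k : K, m0 k 1 = k
  m1_add_left : ∀ (k k' : K) (r : R), m1 (k + k') r = m1 k r + m1 k' r
  m1_add_right : ∀ (k : K) (r r' : R), m1 k (r + r') = m1 k r + m1 k r'
  m1_mul : ∀ (k : K) (r r' : R), m1 k (r * r') = m1 (m1 k r) r'
  m1_one : ∀ k : K, m1 k 1 = k
  comm : ∀ (k : K) (a b : R), m1 (m0 k a) b = m0 (m1 k b) a

variable {R}

/-- A homomorphism of double `R`-modules. -/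
def IsDoubleHom {K : Type v} {K' : Type w} [AddCommGroup K] [AddCommGroup K']
    (DK : DoubleModule R K) (DK' : DoubleModule R K') (f : K → K') : Prop :=
  (∀ k k' : K, f (k + k') = f k + f k') ∧
  (∀ (k : K) (r : R), f (DK.m0 k r) = DK'.m0 (f k) r) ∧
  (∀ (k : K) (r : R), f (DK.m1 k r) = DK'.m1 (f k) r)

/-- An isomorphism of double `R`-modules. -/
def IsDoubleIso {K : Type v} {K' : Type w} [AddCommGroup K] [AddCommGroup K']
    (DK : DoubleModule R K) (DK' : DoubleModule R K') (f : K → K') : Prop :=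
  IsDoubleHom DK DK' f ∧ Function.Bijective f

/-- An anti-automorphism of a double `R`-module: an additive bijection exchanging
the two module structures. -/
def IsDoubleAntiAuto {K : Type v} [AddCommGroup K] (DK : DoubleModule R K) (θ : K → K) : Prop :=
  Function.Bijective θ ∧ (∀ k k' : K, θ (k + k') = θ k + θ k') ∧
  (∀ (k : K) (r : R), θ (DK.m0 k r) = DK.m1 (θ k) r) ∧
  (∀ (k : K) (r : R), θ (DK.m1 k r) = DK.m0 (θ k) r)

variable (R)

/-- A general bilinear form on a right `R`-module `M` (encoded as a module over `Rᵐᵒᵖ`)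
with values in a double `R`-module `(K, DK)`. -/
structure GBF (M : Type v) [AddCommGroup M] [Module Rᵐᵒᵖ M]
    (K : Type w) [AddCommGroup K] (DK : DoubleModule R K) where
  b : M → M → K
  add_left : ∀ x x' y : M, b (x + x') y = b x y + b x' y
  add_right : ∀ x y y' : M, b x (y + y') = b x y + b x y'
  smul_left : ∀ (x y : M) (r : R), b (op r • x) y = DK.m0 (b x y) r
  smul_right : ∀ (x y : M) (r : R), b x (op r • y) = DK.m1 (b x y) r

variable {R}

namespace GBF

variable {M : Type v} [AddCommGroup M] [Module Rᵐᵒᵖ M]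
  {K : Type w} [AddCommGroup K] {DK : DoubleModule R K}

/-- The right adjoint of `β` is injective. -/
def RightInjective (β : GBF R M K DK) : Prop :=
  ∀ x x' : M, (∀ y : M, β.b y x = β.b y x') → x = x'

/-- The right adjoint of `β` is bijective onto `Hom_R(M, K₀)`. -/
def RightRegular (β : GBF R M K DK) : Prop :=
  β.RightInjective ∧
  ∀ f : M → K, (∀ y y' : M, f (y + y') = f y + f y') →
    (∀ (y : M) (r : R), f (op r • y) = DK.m0 (f y) r) →
    ∃ x : M, ∀ y : M, f y = β.b y x

/-- The left adjoint of `β` is injective. -/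
def LeftInjective (β : GBF R M K DK) : Prop :=
  ∀ x x' : M, (∀ y : M, β.b x y = β.b x' y) → x = x'

/-- The left adjoint of `β` is bijective onto `Hom_R(M, K₁)`. -/
def LeftRegular (β : GBF R M K DK) : Prop :=
  β.LeftInjective ∧
  ∀ f : M → K, (∀ y y' : M, f (y + y') = f y + f y') →
    (∀ (y : M) (r : R), f (op r • y) = DK.m1 (f y) r) →
    ∃ x : M, ∀ y : M, f y = β.b x y

/-- `α` is an adjoint anti-endomorphism for `β`: `β(w x, y) = β(x, α(w) y)`. -/
def IsAdjoint (β : GBF R M K DK) (α : Module.End Rᵐᵒᵖ M → Module.End Rᵐᵒᵖ M) : Prop :=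
  ∀ (w : Module.End Rᵐᵒᵖ M) (x y : M), β.b (w x) y = β.b x (α w y)

/-- Similarity of general bilinear forms on the same module. -/
def Similar {K' : Type v'} [AddCommGroup K'] {DK' : DoubleModule R K'}
    (β : GBF R M K DK) (β' : GBF R M K' DK') : Prop :=
  ∃ f : K → K', IsDoubleIso DK DK' f ∧ ∀ x y : M, β'.b x y = f (β.b x y)

end GBF

section Kalpha

variable {M : Type v} [AddCommGroup M] [Module Rᵐᵒᵖ M]

/-- The subgroup of `M ⊗_ℤ M` generated by the elements `(w x) ⊗ y - x ⊗ (α w y)`. -/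
def kalphaRel (α : Module.End Rᵐᵒᵖ M → Module.End Rᵐᵒᵖ M) : Submodule ℤ (M ⊗[ℤ] M) :=
  Submodule.span ℤ
    {z | ∃ (w : Module.End Rᵐᵒᵖ M) (x y : M), z = (w x) ⊗ₜ[ℤ] y - x ⊗ₜ[ℤ] (α w y)}

/-- `K_α`, the quotient of `M ⊗_ℤ M` by the relations `(w x) ⊗ y = x ⊗ (α w y)`. -/
abbrev Kalpha (α : Module.End Rᵐᵒᵖ M → Module.End Rᵐᵒᵖ M) : Type _ :=
  (M ⊗[ℤ] M) ⧸ kalphaRel α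

/-- The map `x ⊗ y ↦ (x·r) ⊗ y` on `M ⊗_ℤ M`. -/
noncomputable def smulLeftMap (r : R) : (M ⊗[ℤ] M) →ₗ[ℤ] (M ⊗[ℤ] M) :=
  TensorProduct.map ((DistribMulAction.toAddMonoidHom M (op r : Rᵐᵒᵖ)).toIntLinearMap)
    LinearMap.id

/-- The map `x ⊗ y ↦ x ⊗ (y·r)` on `M ⊗_ℤ M`. -/
noncomputable def smulRightMap (r : R) : (M ⊗[ℤ] M) →ₗ[ℤ] (M ⊗[ℤ] M) :=
  TensorProduct.map LinearMap.id
    ((DistribMulAction.toAddMonoidHom M (op r : Rᵐᵒᵖ)).toIntLinearMap)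

theorem smulLeftMap_tmul (r : R) (x y : M) :
    smulLeftMap r (x ⊗ₜ[ℤ] y) = (op r • x) ⊗ₜ[ℤ] y := rfl

theorem smulRightMap_tmul (r : R) (x y : M) :
    smulRightMap r (x ⊗ₜ[ℤ] y) = x ⊗ₜ[ℤ] (op r • y) := rfl

theorem kalphaRel_le_left (α : Module.End Rᵐᵒᵖ M → Module.End Rᵐᵒᵖ M) (r : R) :
    kalphaRel α ≤ (kalphaRel α).comap (smulLeftMap (M := M) r) := by
  rw [kalphaRel, Submodule.span_le]
  rintro _ ⟨w, x, y, rfl⟩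
  rw [SetLike.mem_coe, Submodule.mem_comap, map_sub]
  have h1 : smulLeftMap (M := M) r ((w x) ⊗ₜ[ℤ] y) = (w (op r • x)) ⊗ₜ[ℤ] y := by
    simp [smulLeftMap_tmul, map_smul]
  have h2 : smulLeftMap (M := M) r (x ⊗ₜ[ℤ] (α w y)) = (op r • x) ⊗ₜ[ℤ] (α w y) := by
    simp [smulLeftMap_tmul]
  rw [h1, h2]
  exact Submodule.subset_span ⟨w, op r • x, y, rfl⟩

theorem kalphaRel_le_right (α : Module.End Rᵐᵒᵖ M → Module.End Rᵐᵒᵖ M) (r : R) :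
    kalphaRel α ≤ (kalphaRel α).comap (smulRightMap (M := M) r) := by
  rw [kalphaRel, Submodule.span_le]
  rintro _ ⟨w, x, y, rfl⟩
  rw [SetLike.mem_coe, Submodule.mem_comap, map_sub]
  have h1 : smulRightMap (M := M) r ((w x) ⊗ₜ[ℤ] y) = (w x) ⊗ₜ[ℤ] (op r • y) := by
    simp [smulRightMap_tmul]
  have h2 : smulRightMap (M := M) r (x ⊗ₜ[ℤ] (α w y)) = x ⊗ₜ[ℤ] (α w (op r • y)) := by
    simp [smulRightMap_tmul, map_smul]
  rw [h1, h2]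
  exact Submodule.subset_span ⟨w, x, op r • y, rfl⟩

/-- The `m0`-action on `K_α`. -/
noncomputable def kSmul0 (α : Module.End Rᵐᵒᵖ M → Module.End Rᵐᵒᵖ M) (r : R) :
    Kalpha α →ₗ[ℤ] Kalpha α :=
  Submodule.mapQ _ _ (smulLeftMap r) (kalphaRel_le_left α r)

/-- The `m1`-action on `K_α`. -/
noncomputable def kSmul1 (α : Module.End Rᵐᵒᵖ M → Module.End Rᵐᵒᵖ M) (r : R) :
    Kalpha α →ₗ[ℤ] Kalpha α :=
  Submodule.mapQ _ _ (smulRightMap r) (kalphaRel_le_right α r)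

theorem kSmul0_mk (α : Module.End Rᵐᵒᵖ M → Module.End Rᵐᵒᵖ M) (r : R) (t : M ⊗[ℤ] M) :
    kSmul0 α r (Submodule.Quotient.mk t) = Submodule.Quotient.mk (smulLeftMap r t) := rfl

theorem kSmul1_mk (α : Module.End Rᵐᵒᵖ M → Module.End Rᵐᵒᵖ M) (r : R) (t : M ⊗[ℤ] M) :
    kSmul1 α r (Submodule.Quotient.mk t) = Submodule.Quotient.mk (smulRightMap r t) := rfl

/-- The double `R`-module structure on `K_α`. -/
noncomputable def KalphaDM (α : Module.End Rᵐᵒᵖ M → Module.End Rᵐᵒᵖ M) :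
    DoubleModule R (Kalpha α) where
  m0 k r := kSmul0 α r k
  m1 k r := kSmul1 α r k
  m0_add_left k k' r := map_add _ k k'
  m0_add_right := by
    intro k r r'
    try dsimp only
    induction k using Submodule.Quotient.induction_on with
    | _ t =>
      rw [kSmul0_mk, kSmul0_mk, kSmul0_mk, ← Submodule.Quotient.mk_add]
      congr 1
      induction t with
      | zero => simp
      | tmul x y => simp [smulLeftMap_tmul, op_add, add_smul, TensorProduct.add_tmul]
      | add a b ha hb => rw [map_add, map_add, map_add, ha, hb]; abel
  m0_mul := by
    intro k r r'
    try dsimp only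
    induction k using Submodule.Quotient.induction_on with
    | _ t =>
      rw [kSmul0_mk, kSmul0_mk, kSmul0_mk]
      congr 1
      induction t with
      | zero => simp
      | tmul x y => simp [smulLeftMap_tmul, op_mul, mul_smul]
      | add a b ha hb => rw [map_add, map_add, map_add, ha, hb]
  m0_one := by
    intro k
    try dsimp only
    induction k using Submodule.Quotient.induction_on with
    | _ t =>
      rw [kSmul0_mk]
      congr 1
      induction t with
      | zero => simp
      | tmul x y => simp [smulLeftMap_tmul]
      | add a b ha hb => rw [map_add, ha, hb]
  m1_add_left k k' r := map_add _ k k'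
  m1_add_right := by
    intro k r r'
    try dsimp only
    induction k using Submodule.Quotient.induction_on with
    | _ t =>
      rw [kSmul1_mk, kSmul1_mk, kSmul1_mk, ← Submodule.Quotient.mk_add]
      congr 1
      induction t with
      | zero => simp
      | tmul x y => simp [smulRightMap_tmul, op_add, add_smul, TensorProduct.tmul_add]
      | add a b ha hb => rw [map_add, map_add, map_add, ha, hb]; abel
  m1_mul := by
    intro k r r'
    try dsimp only
    induction k using Submodule.Quotient.induction_on with
    | _ t =>
      rw [kSmul1_mk, kSmul1_mk, kSmul1_mk]
      congr 1
      induction t with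
      | zero => simp
      | tmul x y => simp [smulRightMap_tmul, op_mul, mul_smul]
      | add a b ha hb => rw [map_add, map_add, map_add, ha, hb]
  m1_one := by
    intro k
    try dsimp only
    induction k using Submodule.Quotient.induction_on with
    | _ t =>
      rw [kSmul1_mk]
      congr 1
      induction t with
      | zero => simp
      | tmul x y => simp [smulRightMap_tmul]
      | add a b ha hb => rw [map_add, ha, hb]
  comm := by
    intro k a c
    try dsimp only
    induction k using Submodule.Quotient.induction_on with
    | _ t =>
      rw [kSmul0_mk, kSmul1_mk, kSmul1_mk, kSmul0_mk]
      congr 1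
      induction t with
      | zero => simp
      | tmul x y => simp [smulLeftMap_tmul, smulRightMap_tmul]
      | add p q hp hq => rw [map_add, map_add, map_add, map_add, hp, hq]

/-- The universal general bilinear form `b_α : M × M → K_α`. -/
noncomputable def balpha (α : Module.End Rᵐᵒᵖ M → Module.End Rᵐᵒᵖ M) :
    GBF R M (Kalpha α) (KalphaDM α) where
  b x y := Submodule.Quotient.mk (x ⊗ₜ[ℤ] y)
  add_left x x' y := by
    try dsimp only
    rw [TensorProduct.add_tmul, Submodule.Quotient.mk_add]
  add_right x y y' := by
    try dsimp only
    rw [TensorProduct.tmul_add, Submodule.Quotient.mk_add]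
  smul_left x y r := by
    show _ = kSmul0 α r (Submodule.Quotient.mk (x ⊗ₜ[ℤ] y))
    rw [kSmul0_mk]
    congr 1
  smul_right x y r := by
    show _ = kSmul1 α r (Submodule.Quotient.mk (x ⊗ₜ[ℤ] y))
    rw [kSmul1_mk]
    congr 1

end Kalpha

end Core

/-! Write `W = End_R(M)`. The relations defining `K_α` say that `K_α = M ⊗_{Wᵒᵖ} M`, the second
factor being a left `Wᵒᵖ`-module through `α`, and the right adjoint of `b_α` is the natural map
`x ↦ (y ↦ y ⊗ x)`. It is inverted by means of coordinates.

If `M` is finitely generated projective, take a dual basis `(xᵢ, φᵢ)` of `M`. The balanced maps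
`u ⊗ v ↦ α(y ↦ u·φᵢ(y)) v` give additive `Hᵢ : K_α → M` with `t·φᵢ(y) = b_α(y, Hᵢ t)`, so
`f(y) = ∑ f(xᵢ)·φᵢ(y) = b_α(y, ∑ Hᵢ f(xᵢ))`, while `∑ Hᵢ (xᵢ ⊗ z) = α(1) z = z` gives injectivity.

If `M` is finitely generated semisimple, `W` is a semisimple ring, so `M` is a projective
`Wᵒᵖ`-module. Its coordinates `s` write every `t ∈ K_α` as `∑ⱼ cⱼ ⊗ j` with `cⱼ` depending
`R`-linearly on `t`; for `R`-linear `f` the indices `j` needed range over a finite set `J` because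
`M` is finitely generated, and then `f(y) = ∑_{j ∈ J} gⱼ(y) ⊗ j = y ⊗ ∑_{j ∈ J} α(gⱼ) j`. -/

def IsAntiEndo.toRingHom {W : Type*} [Ring W] {α : W → W} (hα : IsAntiEndo α) : Wᵐᵒᵖ →+* W where
  toFun w := α w.unop
  map_one' := hα.2.1
  map_mul' u v := hα.2.2 v.unop u.unop
  map_zero' := by simpa using hα.1 0 0
  map_add' u v := hα.1 u.unop v.unop

theorem Module.Projective.exists_finite_dual_basis (A P : Type*) [Semiring A] [AddCommMonoid P]
    [Module A P] [Module.Finite A P] [Module.Projective A P] :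
    ∃ (n : ℕ) (x : Fin n → P) (φ : Fin n → P →ₗ[A] A), ∀ p, ∑ i, φ i p • x i = p := by
  classical
  obtain ⟨n, f, g, -, -, hfg⟩ := Module.Finite.exists_comp_eq_id_of_projective A P
  refine ⟨n, fun i => f fun j => if i = j then 1 else 0, fun i => (LinearMap.proj i).comp g,
    fun p => ?_⟩
  conv_rhs => rw [← LinearMap.id_apply (R := A) p, ← hfg, LinearMap.comp_apply,
    LinearMap.pi_apply_eq_sum_univ f]
  rfl

theorem LinearMap.exists_finset_support_subset {A M ι N : Type*} [Semiring A] [AddCommMonoid M]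
    [Module A M] [Module.Finite A M] [AddCommMonoid N] [Module A N] (Φ : M →ₗ[A] ι →₀ N) :
    ∃ J : Finset ι, ∀ y, (Φ y).support ⊆ J := by
  classical
  obtain ⟨S, hS⟩ := Module.Finite.fg_top (R := A) (M := M)
  set J := S.biUnion fun x => (Φ x).support
  have hspan : Submodule.span A (S : Set M) ≤ (Finsupp.supported N A (J : Set ι)).comap Φ := by
    rw [Submodule.span_le]
    intro x hx
    simpa [Finsupp.mem_supported] using Finset.subset_biUnion_of_mem (fun x => (Φ x).support) hx
  refine ⟨J, fun y => ?_⟩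
  exact_mod_cast (Finsupp.mem_supported A _).1 (hspan (hS ▸ Submodule.mem_top))

namespace GBF

variable {R : Type u} [Ring R] {M : Type v} [AddCommGroup M] [Module Rᵐᵒᵖ M]
  {K : Type w} [AddCommGroup K] {DK : DoubleModule R K}

theorem b_zero_left (β : GBF R M K DK) (y : M) : β.b 0 y = 0 :=
  map_zero (AddMonoidHom.mk' (β.b · y) (β.add_left · · y))

theorem b_zero_right (β : GBF R M K DK) (y : M) : β.b y 0 = 0 :=
  map_zero (AddMonoidHom.mk' (β.b y) (β.add_right y))

theorem b_sum_right (β : GBF R M K DK) (y : M) {ι : Type*} (s : Finset ι) (z : ι → M) :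
    β.b y (∑ i ∈ s, z i) = ∑ i ∈ s, β.b y (z i) :=
  map_sum (AddMonoidHom.mk' (β.b y) (β.add_right y)) z s

end GBF

namespace Kalpha

variable {R : Type u} [Ring R] {M : Type v} [AddCommGroup M] [Module Rᵐᵒᵖ M]
  {α : Module.End Rᵐᵒᵖ M → Module.End Rᵐᵒᵖ M}

theorem balpha_isAdjoint : (balpha α).IsAdjoint α := fun w u v =>
  (Submodule.Quotient.eq _).2 (Submodule.subset_span ⟨w, u, v, rfl⟩)

@[elab_as_elim]
theorem induction_on {P : Kalpha α → Prop} (t : Kalpha α) (zero : P 0)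
    (add : ∀ a b, P a → P b → P (a + b)) (tmul : ∀ u v, P ((balpha α).b u v)) : P t := by
  induction t using Submodule.Quotient.induction_on with
  | _ t =>
    induction t with
    | zero => exact zero
    | tmul u v => exact tmul u v
    | add a b ha hb => exact add _ _ ha hb

theorem m0_zero (r : R) : (KalphaDM α).m0 0 r = 0 := map_zero (kSmul0 α r)

noncomputable def lift {A : Type*} [AddCommGroup A] (B : M → M → A)
    (add_left : ∀ u u' v, B (u + u') v = B u v + B u' v)
    (add_right : ∀ u v v', B u (v + v') = B u v + B u v')
    (comp : ∀ w u v, B (w u) v = B u (α w v)) : Kalpha α →+ A :=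
  let B₂ : M →+ M →+ A :=
    AddMonoidHom.mk' (fun u => AddMonoidHom.mk' (B u) (add_right u))
      fun u u' => AddMonoidHom.ext (add_left u u')
  ((kalphaRel α).liftQ (TensorProduct.liftAddHom B₂ fun n u v => by simp).toIntLinearMap <| by
    rw [kalphaRel, Submodule.span_le]
    rintro _ ⟨w, u, v, rfl⟩
    simp [B₂, comp]).toAddMonoidHom

noncomputable def contract (hα : IsAntiEndo α) (φ : M →ₗ[Rᵐᵒᵖ] Rᵐᵒᵖ) : Kalpha α →+ M :=
  lift (fun u v => α (φ.smulRight u) v)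
    (fun u u' v => by
      rw [show φ.smulRight (u + u') = φ.smulRight u + φ.smulRight u' by ext; simp [smul_add],
        hα.1]
      rfl)
    (fun u v v' => map_add _ v v')
    (fun w u v => by
      rw [show φ.smulRight (w u) = w * φ.smulRight u by ext; simp, hα.2.2]
      rfl)

theorem contract_balpha (hα : IsAntiEndo α) (φ : M →ₗ[Rᵐᵒᵖ] Rᵐᵒᵖ) (u v : M) :
    contract hα φ ((balpha α).b u v) = α (φ.smulRight u) v := rfl

theorem m0_eq_balpha_contract (hα : IsAntiEndo α) (φ : M →ₗ[Rᵐᵒᵖ] Rᵐᵒᵖ) (t : Kalpha α)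
    (y : M) : (KalphaDM α).m0 t (unop (φ y)) = (balpha α).b y (contract hα φ t) := by
  induction t using induction_on with
  | zero => rw [m0_zero, map_zero, GBF.b_zero_right]
  | add a b ha hb => rw [(KalphaDM α).m0_add_left, ha, hb, map_add, (balpha α).add_right]
  | tmul u v =>
    rw [← (balpha α).smul_left, op_unop, contract_balpha, ← balpha_isAdjoint]
    rfl

section Twisted

variable [Module (Module.End Rᵐᵒᵖ M)ᵐᵒᵖ M]

noncomputable def coord (hα : ∀ w z, op w • z = α w z)
    (s : M →ₗ[(Module.End Rᵐᵒᵖ M)ᵐᵒᵖ] M →₀ (Module.End Rᵐᵒᵖ M)ᵐᵒᵖ) : Kalpha α →+ (M →₀ M) :=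
  lift (fun u v => (s v).mapRange (fun c => c.unop u) (by simp))
    (fun u u' v => by ext; simp)
    (fun u v v' => by ext; simp)
    (fun w u v => by ext; simp [← hα])

theorem coord_balpha (hα : ∀ w z, op w • z = α w z)
    (s : M →ₗ[(Module.End Rᵐᵒᵖ M)ᵐᵒᵖ] M →₀ (Module.End Rᵐᵒᵖ M)ᵐᵒᵖ) (u v : M) :
    coord hα s ((balpha α).b u v) = (s v).mapRange (fun c => c.unop u) (by simp) := rfl

theorem coord_m0 (hα : ∀ w z, op w • z = α w z)
    (s : M →ₗ[(Module.End Rᵐᵒᵖ M)ᵐᵒᵖ] M →₀ (Module.End Rᵐᵒᵖ M)ᵐᵒᵖ) (t : Kalpha α) (r : R) :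
    coord hα s ((KalphaDM α).m0 t r) = op r • coord hα s t := by
  induction t using induction_on with
  | zero => rw [m0_zero, map_zero, smul_zero]
  | add a b ha hb => rw [(KalphaDM α).m0_add_left, map_add, ha, hb, map_add, smul_add]
  | tmul u v =>
    ext j
    rw [← (balpha α).smul_left, Finsupp.smul_apply, coord_balpha, coord_balpha,
      Finsupp.mapRange_apply, Finsupp.mapRange_apply, map_smul]

theorem coord_sum_balpha (hα : ∀ w z, op w • z = α w z)
    (s : M →ₗ[(Module.End Rᵐᵒᵖ M)ᵐᵒᵖ] M →₀ (Module.End Rᵐᵒᵖ M)ᵐᵒᵖ)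
    (hs : ∀ v, Finsupp.linearCombination _ id (s v) = v) (t : Kalpha α) :
    (coord hα s t).sum (fun j m => (balpha α).b m j) = t := by
  induction t using induction_on with
  | zero => rw [map_zero, Finsupp.sum_zero_index]
  | add a b ha hb =>
    rw [map_add, Finsupp.sum_add_index' (fun j => GBF.b_zero_left _ j)
      (fun j m m' => (balpha α).add_left m m' j), ha, hb]
  | tmul u v =>
    have hv := hs v
    rw [Finsupp.linearCombination_apply] at hv
    calc (coord hα s ((balpha α).b u v)).sum (fun j m => (balpha α).b m j)
        = (s v).sum (fun j c => (balpha α).b u (c • j)) := by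
          rw [coord_balpha, Finsupp.sum_mapRange_index fun j => GBF.b_zero_left _ j]
          refine Finsupp.sum_congr fun j _ => ?_
          rw [← op_unop (s v j), hα, unop_op]
          exact balpha_isAdjoint _ u j
      _ = (balpha α).b u v := by
          rw [Finsupp.sum, ← GBF.b_sum_right]
          conv_rhs => rw [← hv]
          rfl

end Twisted

end Kalpha

open Kalpha in
theorem balpha_rightRegular_of_projective {R : Type u} [Ring R] {M : Type v} [AddCommGroup M]
    [Module Rᵐᵒᵖ M] [Module.Finite Rᵐᵒᵖ M] [Module.Projective Rᵐᵒᵖ M]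
    {α : Module.End Rᵐᵒᵖ M → Module.End Rᵐᵒᵖ M} (hα : IsAntiEndo α) :
    (balpha α).RightRegular := by
  obtain ⟨n, x, φ, hxφ⟩ := Module.Projective.exists_finite_dual_basis Rᵐᵒᵖ M
  have hsum : ∑ i, (φ i).smulRight (x i) = 1 := LinearMap.ext fun p => by simp [hxφ]
  have hcontract (z : M) : ∑ i, contract hα (φ i) ((balpha α).b (x i) z) = z := by
    have hα_sum : ∑ i, α ((φ i).smulRight (x i)) = α (∑ i, (φ i).smulRight (x i)) :=
      (map_sum (AddMonoidHom.mk' α hα.1) _ _).symm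
    simp only [contract_balpha, ← LinearMap.sum_apply, hα_sum, hsum, hα.2.1, Module.End.one_apply]
  refine ⟨fun a a' h => ?_, fun f hadd hsmul => ⟨∑ i, contract hα (φ i) (f (x i)), fun y => ?_⟩⟩
  · rw [← hcontract a, ← hcontract a']
    simp only [h]
  · calc f y = f (∑ i, φ i y • x i) := by rw [hxφ]
      _ = ∑ i, (KalphaDM α).m0 (f (x i)) (unop (φ i y)) := by
        refine (map_sum (AddMonoidHom.mk' f hadd) _ _).trans (Finset.sum_congr rfl fun i _ => ?_)
        rw [AddMonoidHom.mk'_apply, ← hsmul, op_unop]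
      _ = (balpha α).b y (∑ i, contract hα (φ i) (f (x i))) := by
        rw [GBF.b_sum_right]
        exact Finset.sum_congr rfl fun i _ => m0_eq_balpha_contract hα (φ i) (f (x i)) y

open Kalpha in
theorem balpha_rightRegular_of_projective_endMulOpposite {R : Type u} [Ring R] {M : Type v}
    [AddCommGroup M] [Module Rᵐᵒᵖ M] [Module.Finite Rᵐᵒᵖ M]
    [Module (Module.End Rᵐᵒᵖ M)ᵐᵒᵖ M] [Module.Projective (Module.End Rᵐᵒᵖ M)ᵐᵒᵖ M]
    {α : Module.End Rᵐᵒᵖ M → Module.End Rᵐᵒᵖ M} (hα : ∀ w z, op w • z = α w z) :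
    (balpha α).RightRegular := by
  obtain ⟨s, hs⟩ := Module.projective_def'.1 ‹Module.Projective (Module.End Rᵐᵒᵖ M)ᵐᵒᵖ M›
  have hs' (v : M) : Finsupp.linearCombination _ id (s v) = v := LinearMap.congr_fun hs v
  refine ⟨fun a a' h => ?_, fun f hadd hsmul => ?_⟩
  · have hsa : s a = s a' := by
      ext j : 1
      refine unop_injective (LinearMap.ext fun y => ?_)
      simpa [coord_balpha] using DFunLike.congr_fun (congrArg (coord hα s) (h y)) j
    rw [← hs' a, ← hs' a', hsa]
  · let Φ : M →ₗ[Rᵐᵒᵖ] M →₀ M :=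
      { toFun y := coord hα s (f y)
        map_add' y y' := by simp only [hadd, map_add]
        map_smul' c y := by
          rw [← op_unop c, hsmul, coord_m0, RingHom.id_apply] }
    obtain ⟨J, hJ⟩ := Φ.exists_finset_support_subset
    let g (j : M) : Module.End Rᵐᵒᵖ M := Finsupp.lapply j ∘ₗ Φ
    refine ⟨∑ j ∈ J, α (g j) j, fun y => ?_⟩
    calc f y = (Φ y).sum (fun j m => (balpha α).b m j) := (coord_sum_balpha hα s hs' (f y)).symm
      _ = ∑ j ∈ J, (balpha α).b (g j y) j :=
        Finsupp.sum_of_support_subset _ (hJ y) _ fun j _ => GBF.b_zero_left _ j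
      _ = (balpha α).b y (∑ j ∈ J, α (g j) j) := by
        rw [GBF.b_sum_right]
        exact Finset.sum_congr rfl fun j _ => balpha_isAdjoint (g j) y j

/-- If `M` is finitely generated projective, or finitely generated
semisimple, then `b_α` is right regular for every anti-endomorphism `α` of `End_R(M)`. -/
theorem stmt_9 {R : Type u} [Ring R] {M : Type v} [AddCommGroup M] [Module Rᵐᵒᵖ M]
    (h : (Module.Finite Rᵐᵒᵖ M ∧ Module.Projective Rᵐᵒᵖ M) ∨
      (Module.Finite Rᵐᵒᵖ M ∧ IsSemisimpleModule Rᵐᵒᵖ M)) :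
    ∀ α : Module.End Rᵐᵒᵖ M → Module.End Rᵐᵒᵖ M, IsAntiEndo α →
      (balpha (M := M) α).RightRegular := by
  intro α hα
  rcases h with ⟨_, _⟩ | ⟨_, _⟩
  · exact balpha_rightRegular_of_projective hα
  · let := Module.compHom M hα.toRingHom
    have := IsSemisimpleRing.moduleEnd Rᵐᵒᵖ M
    have := Module.projective_of_isSemisimpleRing (Module.End Rᵐᵒᵖ M)ᵐᵒᵖ M
    exact balpha_rightRegular_of_projective_endMulOpposite fun _ _ => rfl
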